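/- (Deterministic core of Lemma 4.1) Fix p₁,…,p_s ∈ [0,1], a set I ⊆ {1,…,s} of true indices, nondecreasing constants α₁ ≤ ⋯ ≤ α_s, and γ ∈ [0,1). Apply the stepup procedure; suppose exactly j hypotheses are rejected (j ≥ 1) and at least m(j) = ⌊γj⌋ + 1 of them are true (i.e. FDP > γ). Then, setting k = j - s + |I|, we have |I| ≥ m(j) and q₍(k ∨ m(j))₎ ≤ α_j, where q₍ᵢ₎ is the i-th smallest of (pᵢ)_{i∈I} and x∨y = max(x,y). -/

import Mathlib

open MeasureTheory Finset
open scoped Classical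

/-- `orderStat p k` is the `k`-th smallest value (1-indexed) among `p 0, …, p (n-1)`. -/
noncomputable def orderStat {n : ℕ} (p : Fin n → ℝ) (k : ℕ) : ℝ :=
  if h : k - 1 < n then p (Tuple.sort p ⟨k - 1, h⟩) else 0

/-- The number of rejections of the stepup procedure with critical values
`c 1 ≤ … ≤ c n` (1-indexed): the largest `j` with `p_(j) ≤ c j` (0 if none). -/
noncomputable def numReject {n : ℕ} (c : ℕ → ℝ) (p : Fin n → ℝ) : ℕ :=
  ((Finset.Icc 1 n).filter (fun j => orderStat p j ≤ c j)).sup id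

/-- The indices rejected by the stepup procedure: those carrying the
`numReject c p` smallest p-values (via the sorting permutation). -/
noncomputable def rejectedSet {n : ℕ} (c : ℕ → ℝ) (p : Fin n → ℝ) : Finset (Fin n) :=
  (Finset.univ.filter (fun j : Fin n => (j : ℕ) + 1 ≤ numReject c p)).image (Tuple.sort p)

/-- The `k`-th smallest (1-indexed) of the p-values with indices in `I`. -/
noncomputable def trueOrderStat {n : ℕ} (I : Finset (Fin n)) (p : Fin n → ℝ) (k : ℕ) : ℝ :=
  orderStat (fun j : Fin I.card => p (I.orderIsoOfFin rfl j).1) k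

/-! Every rejected p-value is at most `p₍ⱼ₎ ≤ α_j`. The rejected true indices therefore supply
at least `m(j)` true p-values below `α_j`, and also at least `j + |I| - s` of them, since `j`
rejected and `|I|` true indices fit among `s`. Having that many true p-values below `α_j` bounds
the corresponding order statistic `q₍ₖ ∨ ₘ₍ⱼ₎₎`. -/

lemma Finset.card_add_card_sub_le_card_inter {α : Type*} [Fintype α] [DecidableEq α]
    (A B : Finset α) : #A + #B - Fintype.card α ≤ #(A ∩ B) := by
  have := card_union_add_card_inter A B
  have := card_le_univ (A ∪ B)
  omega

lemma orderStat_le_of_le_card_filter {n : ℕ} (q : Fin n → ℝ) {x : ℝ} {t : ℕ} (ht : 1 ≤ t)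
    (hcard : t ≤ #{a | q a ≤ x}) : orderStat q t ≤ x := by
  have hsorted : #{i | q (Tuple.sort q i) ≤ x} = #{a | q a ≤ x} :=
    card_equiv (Tuple.sort q) (by simp)
  have htn : t - 1 < n := by
    have := card_le_univ (univ.filter fun a => q a ≤ x)
    simp only [Fintype.card_fin] at this
    omega
  rw [orderStat, dif_pos htn]
  exact (Tuple.lt_card_le_iff_apply_le_of_monotone (Tuple.monotone_sort q)).1
    (by simp only [Function.comp_apply, hsorted]; omega)

lemma trueOrderStat_le_of_le_card_filter {n : ℕ} (I : Finset (Fin n)) (p : Fin n → ℝ) {x : ℝ}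
    {t : ℕ} (ht : 1 ≤ t) (hcard : t ≤ #{i ∈ I | p i ≤ x}) : trueOrderStat I p t ≤ x := by
  refine orderStat_le_of_le_card_filter _ ht (hcard.trans_eq ?_)
  conv_lhs => rw [← I.map_orderEmbOfFin_univ rfl]
  rw [filter_map, card_map]
  -- `orderEmbOfFin` is by definition `orderIsoOfFin` followed by the coercion out of the subtype
  rfl

section StepUp

variable {n : ℕ} (c : ℕ → ℝ) (p : Fin n → ℝ)

lemma numReject_le : numReject c p ≤ n :=
  Finset.sup_le fun _ hj => (mem_Icc.1 (mem_filter.1 hj).1).2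

lemma orderStat_numReject_le (h : numReject c p ≠ 0) :
    orderStat p (numReject c p) ≤ c (numReject c p) := by
  have hne : ((Icc 1 n).filter fun j => orderStat p j ≤ c j).Nonempty := by
    by_contra hemp
    rw [not_nonempty_iff_eq_empty] at hemp
    simp [numReject, hemp] at h
  obtain ⟨j, hj, hsup⟩ := exists_mem_eq_sup _ hne id
  rw [numReject, hsup]
  exact (mem_filter.1 hj).2

lemma card_rejectedSet : #(rejectedSet c p) = numReject c p := by
  rw [rejectedSet, card_image_of_injective _ (Tuple.sort p).injective]
  simp only [Nat.add_one_le_iff, Fin.card_filter_val_lt]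
  exact min_eq_right (numReject_le c p)

variable {c p} in
lemma apply_le_orderStat_numReject_of_mem_rejectedSet {i : Fin n} (hi : i ∈ rejectedSet c p) :
    p i ≤ orderStat p (numReject c p) := by
  obtain ⟨b, hb, rfl⟩ := mem_image.1 hi
  replace hb : (b : ℕ) + 1 ≤ numReject c p := (mem_filter.1 hb).2
  have hlt : numReject c p - 1 < n := by have := numReject_le c p; omega
  rw [orderStat, dif_pos hlt]
  exact Tuple.monotone_sort p (show b ≤ ⟨_, hlt⟩ from Fin.le_def.2 (by dsimp only; omega))

end StepUp

theorem stmt13_general {s : ℕ} (p : Fin s → ℝ) (I : Finset (Fin s)) (γ : ℝ) (c : ℕ → ℝ)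
    (j : ℕ) (hj : numReject c p = j) (hj1 : 1 ≤ j)
    (htrue : Nat.floor (γ * (j : ℝ)) + 1 ≤ (rejectedSet c p ∩ I).card) :
    Nat.floor (γ * (j : ℝ)) + 1 ≤ I.card ∧
      trueOrderStat I p (max (j + I.card - s) (Nat.floor (γ * (j : ℝ)) + 1)) ≤ c j := by
  subst hj
  have hsub : rejectedSet c p ∩ I ⊆ {i ∈ I | p i ≤ c (numReject c p)} := fun i hi =>
    mem_filter.2 ⟨(mem_inter.1 hi).2, (apply_le_orderStat_numReject_of_mem_rejectedSet
      (mem_inter.1 hi).1).trans (orderStat_numReject_le c p (by omega))⟩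
  refine ⟨htrue.trans (card_le_card inter_subset_right),
    trueOrderStat_le_of_le_card_filter I p (le_max_of_le_right (by omega)) ?_⟩
  refine (max_le ?_ htrue).trans (card_le_card hsub)
  simpa [card_rejectedSet] using card_add_card_sub_le_card_inter (rejectedSet c p) I

/-- Deterministic core of Lemma 4.1: if the stepup procedure rejects exactly
`j ≥ 1` hypotheses and at least `m(j) = ⌊γj⌋ + 1` of them are true (FDP > γ),
then `|I| ≥ m(j)` and `q_((j-s+|I|) ∨ m(j)) ≤ α_j` (the truncated subtraction
`j + |I| - s` realizes `k = j - s + |I|` inside the max). -/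
theorem stmt13 {s : ℕ} (p : Fin s → ℝ) (hval : ∀ i, p i ∈ Set.Icc (0 : ℝ) 1)
    (I : Finset (Fin s)) (γ : ℝ) (hγ : γ ∈ Set.Ico (0 : ℝ) 1)
    (c : ℕ → ℝ) (hc : ∀ i j, 1 ≤ i → i ≤ j → j ≤ s → c i ≤ c j)
    (j : ℕ) (hj : numReject c p = j) (hj1 : 1 ≤ j)
    (htrue : Nat.floor (γ * (j : ℝ)) + 1 ≤ (rejectedSet c p ∩ I).card) :
    Nat.floor (γ * (j : ℝ)) + 1 ≤ I.card ∧
      trueOrderStat I p (max (j + I.card - s) (Nat.floor (γ * (j : ℝ)) + 1)) ≤ c j :=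
  stmt13_general p I γ c j hj hj1 htrue
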